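/- arXiv:math/0610674 — 5 statements merged into one kernel-verified Lean document; each statement's English description precedes it below -/
import Mathlib

section
/- Let (𝔫, ⟨·,·⟩) be a generalized Heisenberg (H-type) algebra with center 𝔷 and 𝔳 the orthogonal complement of 𝔷, and let z ∈ 𝔷 with z ≠ 0. Then the linear map (−‖z‖² ρ_z) ⊕ J_z on 𝔫 = 𝔷 ⊕ 𝔳, where ρ_z is the orthogonal reflection of 𝔷 across the hyperplane (ℝz)^⊥, is a Lie algebra automorphism of 𝔫. -/
/-!
Brackets are central and the centre is killed by the bracket, so both sides of
`S [x, y] = [S x, S y]` only see the `𝔳`-components of `x` and `y`. Polarizing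
`J_w² = -‖w‖²` gives the Clifford relation `J_a J_z + J_z J_a = -2⟨a, z⟩`, whence for `a ∈ 𝔷`
`⟨a, [J_z u, J_z v]⟩ = ⟨J_a J_z u, J_z v⟩ = 2⟨a, z⟩⟨z, [u, v]⟩ - ‖z‖²⟨a, [u, v]⟩`,
i.e. `[J_z u, J_z v] = -‖z‖² ρ_z [u, v]`. Both `ρ_z` and `J_z` are injective, and `S` preserves
`𝔷` and `𝔳`, so `S` is injective, hence bijective in finite dimension.
-/

open scoped RealInnerProductSpace

namespace LinearMap

variable {E : Type*} [NormedAddCommGroup E] [InnerProductSpace ℝ E]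

theorem norm_sq_smul_apply_of_reflection {ρ : E →ₗ[ℝ] E} {z : E} (h₁ : ρ z = -z)
    (h₂ : ∀ w, ⟪w, z⟫ = 0 → ρ w = w) (m : E) :
    ‖z‖ ^ 2 • ρ m = ‖z‖ ^ 2 • m - (2 * ⟪z, m⟫) • z := by
  have hperp : ⟪‖z‖ ^ 2 • m - ⟪z, m⟫ • z, z⟫ = 0 := by
    rw [inner_sub_left, real_inner_smul_left, real_inner_smul_left, real_inner_self_eq_norm_sq,
      real_inner_comm]
    ring
  have h := h₂ _ hperp
  rw [map_sub, map_smul, map_smul, h₁] at h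
  linear_combination (norm := module) h

theorem injective_of_reflection {ρ : E →ₗ[ℝ] E} {z : E} (hz : z ≠ 0) (h₁ : ρ z = -z)
    (h₂ : ∀ w, ⟪w, z⟫ = 0 → ρ w = w) : Function.Injective ρ := by
  refine (injective_iff_map_eq_zero ρ).mpr fun m hm => ?_
  have hsq : ‖z‖ ^ 2 ≠ 0 := by positivity
  have hm' := norm_sq_smul_apply_of_reflection h₁ h₂ m
  rw [hm, smul_zero] at hm'
  have hzm : ⟪z, m⟫ = 0 := by
    have h := congrArg (⟪z, ·⟫) hm'
    simp only [inner_zero_right, inner_sub_right, real_inner_smul_right,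
      real_inner_self_eq_norm_sq] at h
    exact (mul_eq_zero.mp (by linear_combination h : ‖z‖ ^ 2 * ⟪z, m⟫ = 0)).resolve_left hsq
  rw [← h₂ m (by rw [real_inner_comm, hzm]), hm]

theorem injective_of_orthogonal {K : Submodule ℝ E} [K.HasOrthogonalProjection] {S : E →ₗ[ℝ] E}
    (hSK : ∀ a ∈ K, S a ∈ K) (hSKo : ∀ b ∈ Kᗮ, S b ∈ Kᗮ) (hK : ∀ a ∈ K, S a = 0 → a = 0)
    (hKo : ∀ b ∈ Kᗮ, S b = 0 → b = 0) : Function.Injective S := by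
  refine (injective_iff_map_eq_zero S).mpr fun x hx => ?_
  obtain ⟨a, ha, b, hb, rfl⟩ := K.exists_add_mem_mem_orthogonal x
  rw [map_add] at hx
  have hSa : S a = 0 := Submodule.disjoint_def.mp K.orthogonal_disjoint _ (hSK a ha)
    (by rw [eq_neg_of_add_eq_zero_left hx]; exact neg_mem (hSKo b hb))
  rw [hSa, zero_add] at hx
  rw [hK a ha hSa, hKo b hb hx, add_zero]

end LinearMap

namespace HeisenbergType

variable {𝔫 : Type*} [NormedAddCommGroup 𝔫] [InnerProductSpace ℝ 𝔫]
  {B : 𝔫 →ₗ[ℝ] 𝔫 →ₗ[ℝ] 𝔫} {Z V : Submodule ℝ 𝔫} {J : Z → V →ₗ[ℝ] V}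

theorem bracket_mem_center (hanti : ∀ x y, B x y = -B y x)
    (htwostep : ∀ x y w, B x (B y w) = 0) (hZ : ∀ x, x ∈ Z ↔ ∀ y, B x y = 0) (x y : 𝔫) :
    B x y ∈ Z :=
  (hZ _).mpr fun w => by rw [hanti, htwostep, neg_zero]

theorem J_add (hJ : ∀ (z : Z) (v u : V), ⟪(J z v : 𝔫), (u : 𝔫)⟫ = ⟪(z : 𝔫), B v u⟫)
    (w₁ w₂ : Z) (v : V) : J (w₁ + w₂) v = J w₁ v + J w₂ v :=
  ext_inner_right ℝ fun u => by
    simp only [Submodule.coe_inner, Submodule.coe_add, inner_add_left, hJ]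

theorem inner_J_left (hanti : ∀ x y, B x y = -B y x)
    (hJ : ∀ (z : Z) (v u : V), ⟪(J z v : 𝔫), (u : 𝔫)⟫ = ⟪(z : 𝔫), B v u⟫)
    (w : Z) (a b : V) : ⟪(J w a : 𝔫), (b : 𝔫)⟫ = -⟪(a : 𝔫), (J w b : 𝔫)⟫ := by
  rw [hJ, real_inner_comm (J w b : 𝔫), hJ, hanti (b : 𝔫), inner_neg_right, neg_neg]

theorem J_anticomm (hJ : ∀ (z : Z) (v u : V), ⟪(J z v : 𝔫), (u : 𝔫)⟫ = ⟪(z : 𝔫), B v u⟫)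
    (hH : ∀ (z : Z) (v : V), J z (J z v) = -⟪(z : 𝔫), (z : 𝔫)⟫ • v) (w z : Z) (v : V) :
    J w (J z v) + J z (J w v) = (-2 * ⟪(z : 𝔫), (w : 𝔫)⟫) • v := by
  have h := hH (z + w) v
  simp only [J_add hJ, map_add] at h
  rw [hH, hH, Submodule.coe_add, real_inner_add_add_self, real_inner_comm (w : 𝔫)] at h
  linear_combination (norm := module) h

theorem inner_bracket_J_J (hanti : ∀ x y, B x y = -B y x)
    (hJ : ∀ (z : Z) (v u : V), ⟪(J z v : 𝔫), (u : 𝔫)⟫ = ⟪(z : 𝔫), B v u⟫)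
    (hH : ∀ (z : Z) (v : V), J z (J z v) = -⟪(z : 𝔫), (z : 𝔫)⟫ • v) (z a : Z) (u v : V) :
    ⟪(a : 𝔫), B (J z u) (J z v)⟫
      = 2 * ⟪(z : 𝔫), (a : 𝔫)⟫ * ⟪(z : 𝔫), B u v⟫ - ‖z‖ ^ 2 * ⟪(a : 𝔫), B u v⟫ := by
  have hswap : J a (J z u) = (-2 * ⟪(z : 𝔫), (a : 𝔫)⟫) • u - J z (J a u) :=
    eq_sub_of_add_eq (J_anticomm hJ hH a z u)
  have hu : ⟪(u : 𝔫), (J z v : 𝔫)⟫ = -⟪(z : 𝔫), B u v⟫ := by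
    rw [← hJ, inner_J_left hanti hJ, neg_neg]
  have hzz : ⟪(J z (J a u) : 𝔫), (J z v : 𝔫)⟫ = ‖z‖ ^ 2 * ⟪(a : 𝔫), B u v⟫ := by
    rw [inner_J_left hanti hJ, hH, Submodule.coe_smul, inner_smul_right, ← hJ,
      real_inner_self_eq_norm_sq, Submodule.coe_norm]
    ring
  rw [← hJ, hswap, Submodule.coe_sub, Submodule.coe_smul, inner_sub_left, real_inner_smul_left,
    hu, hzz]
  ring

theorem bracket_J_J (hanti : ∀ x y, B x y = -B y x) (hBZ : ∀ x y, B x y ∈ Z)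
    (hJ : ∀ (z : Z) (v u : V), ⟪(J z v : 𝔫), (u : 𝔫)⟫ = ⟪(z : 𝔫), B v u⟫)
    (hH : ∀ (z : Z) (v : V), J z (J z v) = -⟪(z : 𝔫), (z : 𝔫)⟫ • v) (z : Z) (u v : V) :
    B (J z u) (J z v) = -‖z‖ ^ 2 • B u v + (2 * ⟪(z : 𝔫), B u v⟫) • (z : 𝔫) := by
  rw [← sub_eq_zero]
  refine Submodule.disjoint_def.mp Z.orthogonal_disjoint _
    (Z.sub_mem (hBZ _ _) (Z.add_mem (Z.smul_mem _ (hBZ _ _)) (Z.smul_mem _ z.2))) ?_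
  refine (Submodule.mem_orthogonal _ _).mpr fun a ha => ?_
  rw [inner_sub_right, inner_bracket_J_J hanti hJ hH z ⟨a, ha⟩, inner_add_right,
    real_inner_smul_right, real_inner_smul_right, real_inner_comm a]
  ring

theorem J_injective (hH : ∀ (z : Z) (v : V), J z (J z v) = -⟪(z : 𝔫), (z : 𝔫)⟫ • v)
    {z : Z} (hz : z ≠ 0) : Function.Injective (J z) := by
  refine (injective_iff_map_eq_zero _).mpr fun v hv => ?_
  have h := hH z v
  rw [hv, map_zero, eq_comm, smul_eq_zero] at h
  exact h.resolve_left (by simpa using hz)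

theorem map_bracket_of_orthogonal [Z.HasOrthogonalProjection] (hZl : ∀ a ∈ Z, ∀ y, B a y = 0)
    (hZr : ∀ a ∈ Z, ∀ y, B y a = 0) {S : 𝔫 →ₗ[ℝ] 𝔫} (hSZ : ∀ a ∈ Z, S a ∈ Z)
    (h : ∀ u ∈ Zᗮ, ∀ v ∈ Zᗮ, S (B u v) = B (S u) (S v)) (x y : 𝔫) :
    S (B x y) = B (S x) (S y) := by
  obtain ⟨a, ha, u, hu, rfl⟩ := Z.exists_add_mem_mem_orthogonal x
  obtain ⟨b, hb, v, hv, rfl⟩ := Z.exists_add_mem_mem_orthogonal y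
  simp only [map_add, LinearMap.add_apply, hZl a ha, hZl _ (hSZ a ha), hZr b hb,
    hZr _ (hSZ b hb), zero_add, add_zero]
  exact h u hu v hv

end HeisenbergType

theorem stmt5_general {𝔫 : Type*} [NormedAddCommGroup 𝔫] [InnerProductSpace ℝ 𝔫]
    [FiniteDimensional ℝ 𝔫]
    (B : 𝔫 →ₗ[ℝ] 𝔫 →ₗ[ℝ] 𝔫)
    (hanti : ∀ x y, B x y = -B y x)
    (htwostep : ∀ x y w, B x (B y w) = 0)
    (Z : Submodule ℝ 𝔫) (hZ : ∀ x, x ∈ Z ↔ ∀ y, B x y = 0)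
    (V : Submodule ℝ 𝔫) (hV : V = Zᗮ)
    (J : Z → (V →ₗ[ℝ] V))
    (hJ : ∀ (z : Z) (v u : V), ⟪(J z v : 𝔫), (u : 𝔫)⟫ = ⟪(z : 𝔫), B v u⟫)
    (hH : ∀ (z : Z) (v : V), J z (J z v) = -⟪(z : 𝔫), (z : 𝔫)⟫ • v)
    (z : Z) (hz : z ≠ 0)
    (ρ : Z →ₗ[ℝ] Z)
    (hρ1 : ρ z = -z)
    (hρ2 : ∀ w : Z, ⟪w, z⟫ = 0 → ρ w = w)
    (S : 𝔫 →ₗ[ℝ] 𝔫)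
    (hS1 : ∀ w : Z, S w = ((-‖z‖ ^ 2 • ρ w : Z) : 𝔫))
    (hS2 : ∀ v : V, S v = (J z v : 𝔫)) :
    Function.Bijective S ∧ ∀ x y, S (B x y) = B (S x) (S y) := by
  subst hV
  have hBZ := HeisenbergType.bracket_mem_center hanti htwostep hZ
  have hZl : ∀ a ∈ Z, ∀ y, B a y = 0 := fun a ha => (hZ a).mp ha
  have hZr : ∀ a ∈ Z, ∀ y, B y a = 0 := fun a ha y => by rw [hanti, hZl a ha, neg_zero]
  have hSZ : ∀ a ∈ Z, S a ∈ Z := fun a ha => hS1 ⟨a, ha⟩ ▸ SetLike.coe_mem _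
  have hSZo : ∀ b ∈ Zᗮ, S b ∈ Zᗮ := fun b hb => hS2 ⟨b, hb⟩ ▸ SetLike.coe_mem _
  have hS_center (m : Z) : S m = -‖z‖ ^ 2 • (m : 𝔫) + (2 * ⟪(z : 𝔫), m⟫) • (z : 𝔫) := by
    have h := congrArg Subtype.val (LinearMap.norm_sq_smul_apply_of_reflection hρ1 hρ2 m)
    simp only [Submodule.coe_smul, Submodule.coe_sub, Submodule.coe_inner] at h
    rw [hS1, Submodule.coe_smul]
    linear_combination (norm := module) -h
  have hinj : Function.Injective S := by
    refine LinearMap.injective_of_orthogonal hSZ hSZo (fun a ha hSa => ?_) fun b hb hSb => ?_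
    · rw [hS1 ⟨a, ha⟩, ZeroMemClass.coe_eq_zero, smul_eq_zero,
        map_eq_zero_iff ρ (LinearMap.injective_of_reflection hz hρ1 hρ2)] at hSa
      simpa using hSa.resolve_left (by simpa using hz)
    · rw [hS2 ⟨b, hb⟩, ZeroMemClass.coe_eq_zero,
        map_eq_zero_iff _ (HeisenbergType.J_injective hH hz)] at hSb
      simpa using hSb
  refine ⟨⟨hinj, LinearMap.injective_iff_surjective.mp hinj⟩,
    HeisenbergType.map_bracket_of_orthogonal hZl hZr hSZ fun u hu v hv => ?_⟩
  rw [hS2 ⟨u, hu⟩, hS2 ⟨v, hv⟩, HeisenbergType.bracket_J_J hanti hBZ hJ hH,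
    ← hS_center ⟨_, hBZ u v⟩]

/-- For an H-type algebra `(𝔫, ⟨·,·⟩)` with center `𝔷 = Z`,
`𝔳 = V = Zᗮ`, and `0 ≠ z ∈ 𝔷`, the map `(-‖z‖² ρ_z) ⊕ J_z` (where `ρ_z` is the
orthogonal reflection of `𝔷` across `(ℝz)ᗮ`) is a Lie algebra automorphism of `𝔫`.
Here `S` is the linear map acting as `-‖z‖² ρ` on `Z` and as `J z` on `V`. -/
theorem stmt5 {𝔫 : Type*} [NormedAddCommGroup 𝔫] [InnerProductSpace ℝ 𝔫]
    [FiniteDimensional ℝ 𝔫]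
    (B : 𝔫 →ₗ[ℝ] 𝔫 →ₗ[ℝ] 𝔫)
    (hanti : ∀ x y, B x y = -B y x)
    (hjacobi : ∀ x y z, B (B x y) z + B (B y z) x + B (B z x) y = 0)
    (htwostep : ∀ x y w, B x (B y w) = 0)
    (Z : Submodule ℝ 𝔫) (hZ : ∀ x, x ∈ Z ↔ ∀ y, B x y = 0)
    (V : Submodule ℝ 𝔫) (hV : V = Zᗮ)
    (J : Z → (V →ₗ[ℝ] V))
    (hJ : ∀ (z : Z) (v u : V), ⟪(J z v : 𝔫), (u : 𝔫)⟫ = ⟪(z : 𝔫), B v u⟫)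
    (hH : ∀ (z : Z) (v : V), J z (J z v) = -⟪(z : 𝔫), (z : 𝔫)⟫ • v)
    (z : Z) (hz : z ≠ 0)
    (ρ : Z →ₗ[ℝ] Z)
    (hρ1 : ρ z = -z)
    (hρ2 : ∀ w : Z, ⟪w, z⟫ = 0 → ρ w = w)
    (S : 𝔫 →ₗ[ℝ] 𝔫)
    (hS1 : ∀ w : Z, S w = ((-‖z‖ ^ 2 • ρ w : Z) : 𝔫))
    (hS2 : ∀ v : V, S v = (J z v : 𝔫)) :
    Function.Bijective S ∧ ∀ x y, S (B x y) = B (S x) (S y) :=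
  stmt5_general B hanti htwostep Z hZ V hV J hJ hH z hz ρ hρ1 hρ2 S hS1 hS2
end

section
/- Let V be a finite-dimensional real inner product space of dimension m ≥ 1, and for a unit vector z ∈ V let ρ_z denote the orthogonal reflection across the hyperplane (ℝz)^⊥. Then the subgroup of the orthogonal group O(V) generated by {−ρ_z : z ∈ V, ‖z‖ = 1} equals O(V) if m is even, and equals SO(V) if m is odd. -/
/-!
Mathlib's `reflection (ℝ ∙ z)` fixes `z` and negates `(ℝ ∙ z)ᗮ`, so it is `-ρ_z`, while the
hyperplane reflection `ρ_v` is `reflection (ℝ ∙ v)ᗮ = -reflection (ℝ ∙ v)`. The signs cancel in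
a product of two hyperplane reflections, so `ρ_a ρ_b = (-ρ_a)(-ρ_b)` lies in the group `H`
generated by the `-ρ_z`. By Cartan–Dieudonné every isometry is a product of hyperplane
reflections, each of determinant `-1`, so every isometry of determinant `1` is a product of an
even number of them and lies in `H`. A generator `-ρ_z` has determinant `(-1)^(m-1)`: for odd `m`
this gives `H = SO(V)`; for even `m` it gives `-id ∈ SO(V) ⊆ H`, hence `ρ_v = (-id)(-ρ_v) ∈ H` and
`H = O(V)`.
-/

open scoped RealInnerProductSpace
open Module Submodule

theorem Subgroup.ker_le_of_forall_mul_mem {G M : Type*} [Group G] [Monoid M] {R : Set G}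
    (hR : closure R = ⊤) (hR_inv : ∀ r ∈ R, r⁻¹ ∈ R) {χ : G →* M} {ε : M} (hε : ε ≠ 1)
    (hεε : ε * ε = 1) (hχ : ∀ r ∈ R, χ r = ε) {H : Subgroup G}
    (hH : ∀ r ∈ R, ∀ s ∈ R, r * s ∈ H) : χ.ker ≤ H := by
  let P : G → Prop := fun g => (χ g = 1 → g ∈ H) ∧ (χ g = ε → ∀ r ∈ R, r * g ∈ H)
  have cancel : ∀ a : M, ε * (ε * a) = a := fun a => by rw [← mul_assoc, hεε, one_mul]
  have step : ∀ x ∈ R, ∀ y, P y → P (x * y) := by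
    intro x hx y ih
    simp only [P, map_mul, hχ x hx]
    refine ⟨fun h => ih.2 ?_ x hx, fun h r hr => ?_⟩
    · rw [← cancel (χ y), h, mul_one]
    · rw [← mul_assoc]
      exact mul_mem (hH r hr x hx) (ih.1 (by rw [← cancel (χ y), h, hεε]))
  have hP : ∀ g ∈ closure R, P g := by
    intro g hg
    induction hg using closure_induction_left with
    | one => exact ⟨fun _ => one_mem _, fun h => absurd (h.symm.trans (map_one χ)) hε⟩
    | mul_left x hx y _ ih => exact step x hx y ih
    | inv_mul_cancel x hx y _ ih => exact step x⁻¹ (hR_inv x hx) y ih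
  intro g hg
  exact (hP g (hR ▸ mem_top g)).1 hg

section InnerProductSpace

variable {𝕜 E : Type*} [RCLike 𝕜] [NormedAddCommGroup E] [InnerProductSpace 𝕜 E]

variable (𝕜 E) in
def LinearIsometryEquiv.toLinearEquivHom : (E ≃ₗᵢ[𝕜] E) →* (E ≃ₗ[𝕜] E) where
  toFun f := f.toLinearEquiv
  map_one' := rfl
  map_mul' _ _ := rfl

theorem LinearIsometryEquiv.mem_image_toLinearEquivHom_iff {f : E ≃ₗ[𝕜] E}
    (S : Set (E ≃ₗᵢ[𝕜] E)) :
    f ∈ toLinearEquivHom 𝕜 E '' S ↔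
      ∃ h : ∀ x y, inner 𝕜 (f x) (f y) = inner 𝕜 x y, f.isometryOfInner h ∈ S := by
  constructor
  · rintro ⟨g, hg, rfl⟩
    exact ⟨g.inner_map_map, hg⟩
  · rintro ⟨h, hS⟩
    exact ⟨_, hS, f.isometryOfInner_toLinearEquiv h⟩

theorem LinearMap.coe_eq_reflection_iff (f : E →ₗ[𝕜] E) (K : Submodule 𝕜 E)
    [K.HasOrthogonalProjection] :
    ⇑f = reflection K ↔ (∀ x ∈ K, f x = x) ∧ ∀ w ∈ Kᗮ, f w = -w := by
  constructor
  · intro h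
    rw [h]
    exact ⟨fun x hx => reflection_mem_subspace_eq_self hx,
      fun w hw => reflection_mem_subspace_orthogonalComplement_eq_neg hw⟩
  · rintro ⟨hK, hKperp⟩
    ext x
    obtain ⟨y, hy, w, hw, rfl⟩ := K.exists_add_mem_mem_orthogonal x
    rw [map_add, map_add, hK y hy, hKperp w hw, reflection_mem_subspace_eq_self hy,
      reflection_mem_subspace_orthogonalComplement_eq_neg hw]

theorem reflection_top : reflection (⊤ : Submodule 𝕜 E) = 1 := by
  ext x
  exact reflection_mem_subspace_eq_self trivial

theorem reflection_orthogonal_mul_reflection_orthogonal (K L : Submodule 𝕜 E)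
    [K.HasOrthogonalProjection] [L.HasOrthogonalProjection] :
    reflection Kᗮ * reflection Lᗮ = reflection K * reflection L := by
  ext x
  simp [reflection_orthogonal, LinearIsometryEquiv.mul_def]

end InnerProductSpace

section RealInnerProductSpace

variable (V : Type*) [NormedAddCommGroup V] [InnerProductSpace ℝ V]

def lineReflections : Set (V ≃ₗᵢ[ℝ] V) := {g | ∃ z : V, ‖z‖ = 1 ∧ g = reflection (ℝ ∙ z)}

def hyperplaneReflections : Set (V ≃ₗᵢ[ℝ] V) := {g | ∃ v : V, v ≠ 0 ∧ g = reflection (ℝ ∙ v)ᗮ}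

noncomputable def orthogonalDet : (V ≃ₗᵢ[ℝ] V) →* ℝˣ :=
  LinearEquiv.det.comp (LinearIsometryEquiv.toLinearEquivHom ℝ V)

variable {V}

theorem orthogonalDet_isometryOfInner (f : V ≃ₗ[ℝ] V) (h : ∀ x y, ⟪f x, f y⟫ = ⟪x, y⟫) :
    orthogonalDet V (f.isometryOfInner h) = LinearEquiv.det f := rfl

theorem LinearMap.coe_eq_reflection_span_singleton_iff (f : V →ₗ[ℝ] V) (z : V) :
    ⇑f = reflection (ℝ ∙ z) ↔ f z = z ∧ ∀ w : V, ⟪w, z⟫ = 0 → f w = -w := by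
  rw [coe_eq_reflection_iff]
  refine and_congr ⟨fun h => h z (mem_span_singleton_self z), ?_⟩ ?_
  · intro h x hx
    obtain ⟨c, rfl⟩ := mem_span_singleton.1 hx
    rw [map_smul, h]
  · simp only [mem_orthogonal_singleton_iff_inner_left]

theorem setOf_fixes_and_negates_orthogonal_eq_image_lineReflections :
    {f : V ≃ₗ[ℝ] V | ∃ z : V, ‖z‖ = 1 ∧ f z = z ∧ ∀ w : V, ⟪w, z⟫ = 0 → f w = -w} =
      LinearIsometryEquiv.toLinearEquivHom ℝ V '' lineReflections V := by
  ext f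
  constructor
  · rintro ⟨z, hz, hf⟩
    have := (LinearMap.coe_eq_reflection_span_singleton_iff (f : V →ₗ[ℝ] V) z).2 hf
    exact ⟨_, ⟨z, hz, rfl⟩, LinearEquiv.ext fun x => (congrFun this x).symm⟩
  · rintro ⟨_, ⟨z, hz, rfl⟩, rfl⟩
    exact ⟨z, hz, (LinearMap.coe_eq_reflection_span_singleton_iff _ z).1 rfl⟩

theorem reflection_span_mem_lineReflections {v : V} (hv : v ≠ 0) :
    reflection (ℝ ∙ v) ∈ lineReflections V := by
  have hn : ‖v‖ ≠ 0 := norm_ne_zero_iff.2 hv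
  refine ⟨‖v‖⁻¹ • v, by rw [norm_smul, norm_inv, norm_norm, inv_mul_cancel₀ hn], ?_⟩
  simp only [span_singleton_smul_eq (inv_ne_zero hn).isUnit]

variable [FiniteDimensional ℝ V]

theorem closure_hyperplaneReflections : Subgroup.closure (hyperplaneReflections V) = ⊤ := by
  rw [eq_top_iff, ← LinearIsometryEquiv.reflections_generate, Subgroup.closure_le]
  rintro _ ⟨v, rfl⟩
  rcases eq_or_ne v 0 with rfl | hv
  · simp [reflection_top]
  · exact Subgroup.subset_closure ⟨v, hv, rfl⟩

theorem orthogonalDet_reflection (K : Submodule ℝ V) :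
    orthogonalDet V (reflection K) = (-1) ^ finrank ℝ Kᗮ :=
  linearEquiv_det_reflection K

theorem orthogonalDet_of_mem_hyperplaneReflections {g : V ≃ₗᵢ[ℝ] V}
    (hg : g ∈ hyperplaneReflections V) : orthogonalDet V g = -1 := by
  obtain ⟨v, hv, rfl⟩ := hg
  rw [orthogonalDet_reflection, orthogonal_orthogonal, finrank_span_singleton hv, pow_one]

theorem orthogonalDet_of_mem_lineReflections {g : V ≃ₗᵢ[ℝ] V} (hg : g ∈ lineReflections V) :
    orthogonalDet V g = (-1) ^ (finrank ℝ V - 1) := by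
  obtain ⟨z, hz, rfl⟩ := hg
  have hz0 : z ≠ 0 := norm_ne_zero_iff.1 (by rw [hz]; exact one_ne_zero)
  have hsum := finrank_add_finrank_orthogonal (ℝ ∙ z)
  rw [finrank_span_singleton hz0] at hsum
  rw [orthogonalDet_reflection, ← hsum, Nat.add_sub_cancel_left]

theorem ker_orthogonalDet_le_closure_lineReflections :
    (orthogonalDet V).ker ≤ Subgroup.closure (lineReflections V) := by
  refine Subgroup.ker_le_of_forall_mul_mem closure_hyperplaneReflections ?_ (by norm_num)
    (by norm_num) (fun r hr => orthogonalDet_of_mem_hyperplaneReflections hr) ?_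
  · rintro _ ⟨v, hv, rfl⟩
    exact ⟨v, hv, by simp⟩
  · rintro _ ⟨a, ha, rfl⟩ _ ⟨b, hb, rfl⟩
    rw [reflection_orthogonal_mul_reflection_orthogonal]
    exact mul_mem (Subgroup.subset_closure (reflection_span_mem_lineReflections ha))
      (Subgroup.subset_closure (reflection_span_mem_lineReflections hb))

theorem closure_lineReflections_of_even (h : Even (finrank ℝ V)) :
    Subgroup.closure (lineReflections V) = ⊤ := by
  have hneg : LinearIsometryEquiv.neg ℝ ∈ Subgroup.closure (lineReflections V) := by
    apply ker_orthogonalDet_le_closure_lineReflections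
    rw [MonoidHom.mem_ker, ← reflection_bot, orthogonalDet_reflection, bot_orthogonal_eq_top,
      finrank_top, h.neg_one_pow]
  rw [eq_top_iff, ← closure_hyperplaneReflections, Subgroup.closure_le]
  rintro _ ⟨v, hv, rfl⟩
  rw [reflection_orthogonal]
  exact mul_mem hneg (Subgroup.subset_closure (reflection_span_mem_lineReflections hv))

theorem closure_lineReflections_of_odd (h : Odd (finrank ℝ V)) :
    Subgroup.closure (lineReflections V) = (orthogonalDet V).ker := by
  refine le_antisymm ((Subgroup.closure_le _).2 fun g hg => ?_)
    ker_orthogonalDet_le_closure_lineReflections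
  rw [SetLike.mem_coe, MonoidHom.mem_ker, orthogonalDet_of_mem_lineReflections hg,
    (Nat.Odd.sub_odd h odd_one).neg_one_pow]

end RealInnerProductSpace

theorem stmt6_general {V : Type*} [NormedAddCommGroup V] [InnerProductSpace ℝ V]
    [FiniteDimensional ℝ V]
    (m : ℕ) (hdim : Module.finrank ℝ V = m) :
    (Even m →
      (Subgroup.closure {f : V ≃ₗ[ℝ] V | ∃ z : V, ‖z‖ = 1 ∧ f z = z ∧
          ∀ w : V, ⟪w, z⟫ = 0 → f w = -w} : Set (V ≃ₗ[ℝ] V)) =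
        {f : V ≃ₗ[ℝ] V | ∀ x y : V, ⟪f x, f y⟫ = ⟪x, y⟫}) ∧
    (Odd m →
      (Subgroup.closure {f : V ≃ₗ[ℝ] V | ∃ z : V, ‖z‖ = 1 ∧ f z = z ∧
          ∀ w : V, ⟪w, z⟫ = 0 → f w = -w} : Set (V ≃ₗ[ℝ] V)) =
        {f : V ≃ₗ[ℝ] V | (∀ x y : V, ⟪f x, f y⟫ = ⟪x, y⟫) ∧
          LinearMap.det (f : V →ₗ[ℝ] V) = 1}) := by
  subst hdim
  rw [setOf_fixes_and_negates_orthogonal_eq_image_lineReflections, ← MonoidHom.map_closure,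
    Subgroup.coe_map]
  refine ⟨fun h => ?_, fun h => ?_⟩ <;> ext f <;>
    simp only [LinearIsometryEquiv.mem_image_toLinearEquivHom_iff, Set.mem_ofPred_eq]
  · simp [closure_lineReflections_of_even h]
  · simp [closure_lineReflections_of_odd h, orthogonalDet_isometryOfInner, Units.ext_iff]

/-- Let `V` be a finite-dimensional real inner product space of
dimension `m ≥ 1`.  The subgroup of `GL(V)` generated by the maps `-ρ_z`, for `z` a
unit vector (where `-ρ_z` fixes `z` and is `-id` on `(ℝz)ᗮ`), equals `O(V)` if `m`
is even, and equals `SO(V)` if `m` is odd. -/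
theorem stmt6 {V : Type*} [NormedAddCommGroup V] [InnerProductSpace ℝ V]
    [FiniteDimensional ℝ V]
    (m : ℕ) (hm : 1 ≤ m) (hdim : Module.finrank ℝ V = m) :
    (Even m →
      (Subgroup.closure {f : V ≃ₗ[ℝ] V | ∃ z : V, ‖z‖ = 1 ∧ f z = z ∧
          ∀ w : V, ⟪w, z⟫ = 0 → f w = -w} : Set (V ≃ₗ[ℝ] V)) =
        {f : V ≃ₗ[ℝ] V | ∀ x y : V, ⟪f x, f y⟫ = ⟪x, y⟫}) ∧
    (Odd m →
      (Subgroup.closure {f : V ≃ₗ[ℝ] V | ∃ z : V, ‖z‖ = 1 ∧ f z = z ∧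
          ∀ w : V, ⟪w, z⟫ = 0 → f w = -w} : Set (V ≃ₗ[ℝ] V)) =
        {f : V ≃ₗ[ℝ] V | (∀ x y : V, ⟪f x, f y⟫ = ⟪x, y⟫) ∧
          LinearMap.det (f : V →ₗ[ℝ] V) = 1}) :=
  stmt6_general m hdim
end

section
/- Let m ≥ 1 and 1 ≤ r ≤ m. The map sending an invertible matrix u ∈ GL_r(ℝ) with rows u₁, …, u_r to the lattice ℤũ₁ + ⋯ + ℤũ_r in ℝ^m, where ũᵢ = (uᵢ, 0, …, 0) is uᵢ followed by m − r zeros, induces a well-defined bijection from the double coset space GL_r(ℤ)\GL_r(ℝ)/CO_r(ℝ) onto the set of rank-r lattices in ℝ^m modulo CO_m(ℝ)-equivalence. -/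
open scoped RealInnerProductSpace
open Matrix

/-- A lattice of rank `r` in `ℝ^m`: the additive subgroup generated by `r`
ℝ-linearly independent vectors. -/
def IsLatticeOfRank (m r : ℕ) (Λ : AddSubgroup (EuclideanSpace ℝ (Fin m))) : Prop :=
  ∃ v : Fin r → EuclideanSpace ℝ (Fin m),
    LinearIndependent ℝ v ∧ Λ = AddSubgroup.closure (Set.range v)

/-- Membership in the conformal group `CO(E) = {c·k : c ≠ 0, k ∈ O(E)}`. -/
def IsCO {E : Type*} [NormedAddCommGroup E] [InnerProductSpace ℝ E]
    (g : E →ₗ[ℝ] E) : Prop :=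
  ∃ (c : ℝ) (k : E →ₗ[ℝ] E), c ≠ 0 ∧ (∀ x y, ⟪k x, k y⟫ = ⟪x, y⟫) ∧ g = c • k

/-- `CO_m(ℝ)`-equivalence on the type of rank-`r` lattices in `ℝ^m`. -/
def LatticeRelRank (m r : ℕ)
    (Λ Λ' : {Λ : AddSubgroup (EuclideanSpace ℝ (Fin m)) // IsLatticeOfRank m r Λ}) :
    Prop :=
  ∃ g : EuclideanSpace ℝ (Fin m) →ₗ[ℝ] EuclideanSpace ℝ (Fin m),
    IsCO g ∧ Λ'.1 = AddSubgroup.map g.toAddMonoidHom Λ.1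

/-- The conformal group of `r × r` real matrices: `CO_r(ℝ) = {c·k : c ≠ 0, kᵀk = 1}`. -/
def COMatrix (r : ℕ) : Set (Matrix (Fin r) (Fin r) ℝ) :=
  {G | ∃ (c : ℝ) (k : Matrix (Fin r) (Fin r) ℝ), c ≠ 0 ∧ kᵀ * k = 1 ∧ G = c • k}

/-- The double-coset relation on `GL_r(ℝ)` given by `u ∼ v ⟺ u = C v G` with
`C ∈ GL_r(ℤ)` and `G ∈ CO_r(ℝ)`. -/
def GLRel (r : ℕ) (u v : GL (Fin r) ℝ) : Prop :=
  ∃ (C : GL (Fin r) ℤ) (G : Matrix (Fin r) (Fin r) ℝ), G ∈ COMatrix r ∧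
    (u : Matrix (Fin r) (Fin r) ℝ) =
      ((C : Matrix (Fin r) (Fin r) ℤ)).map Int.cast * (v : Matrix (Fin r) (Fin r) ℝ) * G

/-- The lattice `ℤũ₁ + ⋯ + ℤũ_r ⊆ ℝ^m` spanned by the rows of `u ∈ GL_r(ℝ)`,
each extended by `m - r` zeros. -/
noncomputable def rowLattice (m r : ℕ) (u : Matrix (Fin r) (Fin r) ℝ) :
    AddSubgroup (EuclideanSpace ℝ (Fin m)) :=
  AddSubgroup.closure (Set.range fun i : Fin r =>
    (WithLp.toLp 2 (fun j : Fin m => if hj : (j : ℕ) < r then u i ⟨j, hj⟩ else 0) :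
      EuclideanSpace ℝ (Fin m)))

/-!
Two linearly independent families in `ℝ^m` whose Gram matrices are proportional differ by a
conformal map: the isometry between their spans extends to all of `ℝ^m`. Since the rows of
`u` span a lattice with Gram matrix `u uᵀ`, and `(C v G)(C v G)ᵀ = c² (C v)(C v)ᵀ` for
`G = c k ∈ CO_r(ℝ)`, the map is well defined. Conversely, a conformal map between two row
lattices sends a ℤ-basis to a ℤ-basis, so after a change of basis in `GL_r(ℤ)` the two bases
`v`, `w` satisfy `v vᵀ = c² w wᵀ`, which forces `v = w G` with `G` conformal. Every rank-`r`
lattice is a row lattice up to an isometry: take the coordinates of a basis in an orthonormal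
basis of its span.
-/

section Conformal

variable {E : Type*} [NormedAddCommGroup E] [InnerProductSpace ℝ E]

lemma IsCO.injective {g : E →ₗ[ℝ] E} (hg : IsCO g) : Function.Injective g := by
  obtain ⟨c, k, hc, hk, rfl⟩ := hg
  exact (smul_right_injective E hc).comp (k.isometryOfInner hk).injective

lemma IsCO.comp {f g : E →ₗ[ℝ] E} (hf : IsCO f) (hg : IsCO g) : IsCO (f ∘ₗ g) := by
  obtain ⟨c, k, hc, hk, rfl⟩ := hf
  obtain ⟨d, l, hd, hl, rfl⟩ := hg
  refine ⟨c * d, k ∘ₗ l, mul_ne_zero hc hd, fun x y => (hk _ _).trans (hl x y), ?_⟩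
  ext x
  simp [smul_smul]

lemma IsCO.exists_leftInverse [FiniteDimensional ℝ E] {g : E →ₗ[ℝ] E} (hg : IsCO g) :
    ∃ g' : E →ₗ[ℝ] E, IsCO g' ∧ g' ∘ₗ g = LinearMap.id := by
  obtain ⟨c, k, hc, hk, rfl⟩ := hg
  let e := (k.isometryOfInner hk).toLinearIsometryEquiv rfl
  refine ⟨c⁻¹ • e.symm.toLinearMap, ⟨c⁻¹, _, inv_ne_zero hc, e.symm.inner_map_map, rfl⟩, ?_⟩
  ext x
  have hex : e.symm (k x) = x := e.symm_apply_apply x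
  simp [hex, smul_smul, inv_mul_cancel₀ hc]

lemma exists_isCO_apply_eq_of_inner_eq [FiniteDimensional ℝ E] {ι : Type*} {A B : ι → E}
    (hB : LinearIndependent ℝ B) {c : ℝ} (hc : c ≠ 0)
    (hAB : ∀ i j, ⟪A i, A j⟫ = c ^ 2 * ⟪B i, B j⟫) :
    ∃ g : E →ₗ[ℝ] E, IsCO g ∧ ∀ i, g (B i) = A i := by
  let b := Module.Basis.span hB
  let L : Submodule.span ℝ (Set.range B) →ₗ[ℝ] E := b.constr ℝ fun i => c⁻¹ • A i
  have hLb : ∀ i, L (b i) = c⁻¹ • A i := b.constr_basis ℝ _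
  have hL : ∀ x y, ⟪L x, L y⟫ = ⟪x, y⟫ := by
    have := LinearMap.ext_basis (B := (innerₗ E).compl₁₂ L L)
      (B' := (innerₗ E).compl₁₂ (Submodule.subtype _) (Submodule.subtype _)) b b
      fun i j => by
        rw [LinearMap.compl₁₂_apply, LinearMap.compl₁₂_apply, hLb, hLb]
        simp only [innerₗ_apply_apply, Submodule.subtype_apply, b, Module.Basis.span_apply,
          real_inner_smul_left, real_inner_smul_right, hAB]
        field_simp
    exact fun x y => LinearMap.congr_fun₂ this x y
  let k := (L.isometryOfInner hL).extend
  refine ⟨c • k.toLinearMap, ⟨c, _, hc, k.inner_map_map, rfl⟩, fun i => ?_⟩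
  have hkB : k (B i) = c⁻¹ • A i := by
    rw [← hLb, ← LinearMap.coe_isometryOfInner L hL, ← LinearIsometry.extend_apply]
    simp [b, Module.Basis.span_apply, k]
  simp [hkB, smul_smul, mul_inv_cancel₀ hc]

end Conformal

lemma exists_GL_int_of_closure_range_eq {M ι : Type*} [AddCommGroup M] [Fintype ι]
    [DecidableEq ι] {A B : ι → M} (hA : LinearIndependent ℤ A) (hB : LinearIndependent ℤ B)
    (h : AddSubgroup.closure (Set.range A) = AddSubgroup.closure (Set.range B)) :
    ∃ C : GL ι ℤ, ∀ i, A i = ∑ k, (C : Matrix ι ι ℤ) i k • B k := by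
  have hspan : Submodule.span ℤ (Set.range B) = Submodule.span ℤ (Set.range A) :=
    Submodule.toAddSubgroup_injective <| by
      rw [Submodule.span_int_eq_addSubgroupClosure, Submodule.span_int_eq_addSubgroupClosure, h]
  let bA := Module.Basis.span hA
  let bB := (Module.Basis.span hB).map (LinearEquiv.ofEq _ _ hspan)
  have hbB : ∀ k, (bB k : M) = B k := fun k => by simp [bB, Module.Basis.span_apply]
  have hbA : ∀ k, (bA k : M) = A k := fun k => by simp [bA, Module.Basis.span_apply]
  refine ⟨⟨(bB.toMatrix bA)ᵀ, (bA.toMatrix bB)ᵀ, ?_, ?_⟩, fun i => ?_⟩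
  · rw [← transpose_mul, Module.Basis.toMatrix_mul_toMatrix_flip, transpose_one]
  · rw [← transpose_mul, Module.Basis.toMatrix_mul_toMatrix_flip, transpose_one]
  · have := congrArg Subtype.val (bB.sum_toMatrix_smul_self bA i)
    simp only [Submodule.coe_sum, Submodule.coe_smul, hbA, hbB] at this
    simpa [transpose_apply] using this.symm

lemma exists_mem_COMatrix_eq_mul {r : ℕ} {v w : Matrix (Fin r) (Fin r) ℝ} (hw : IsUnit w)
    {c : ℝ} (hc : c ≠ 0) (h : v * vᵀ = c ^ 2 • (w * wᵀ)) :
    ∃ G ∈ COMatrix r, v = w * G := by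
  have hdet : IsUnit w.det := (isUnit_iff_isUnit_det w).mp hw
  refine ⟨c • (c⁻¹ • (w⁻¹ * v)), ⟨c, _, hc, ?_, rfl⟩, ?_⟩
  · rw [mul_eq_one_comm, transpose_smul, transpose_mul, smul_mul_smul_comm, mul_assoc,
      ← mul_assoc v, h, transpose_nonsing_inv]
    have hdetT : IsUnit wᵀ.det := by rwa [det_transpose]
    rw [Matrix.smul_mul, Matrix.mul_smul, smul_smul, mul_assoc w, mul_nonsing_inv _ hdetT,
      mul_one, nonsing_inv_mul _ hdet, show c⁻¹ * c⁻¹ * c ^ 2 = 1 by field_simp, one_smul]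
  · rw [smul_smul, mul_inv_cancel₀ hc, one_smul, mul_nonsing_inv_cancel_left _ _ hdet]

noncomputable def padZeros (m r : ℕ) : (Fin r → ℝ) →ₗ[ℝ] EuclideanSpace ℝ (Fin m) where
  toFun x := WithLp.toLp 2 fun j => if hj : (j : ℕ) < r then x ⟨j, hj⟩ else 0
  map_add' x y := by
    ext j
    by_cases hj : (j : ℕ) < r <;> simp [hj]
  map_smul' c x := by
    ext j
    by_cases hj : (j : ℕ) < r <;> simp [hj]

section Rows

variable {m r : ℕ}

lemma rowLattice_eq_closure (u : Matrix (Fin r) (Fin r) ℝ) :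
    rowLattice m r u = AddSubgroup.closure (Set.range fun i => padZeros m r (u i)) :=
  rfl

lemma inner_padZeros (hrm : r ≤ m) (x y : Fin r → ℝ) :
    ⟪padZeros m r x, padZeros m r y⟫ = x ⬝ᵥ y := by
  rw [EuclideanSpace.inner_eq_star_dotProduct, dotProduct_comm, star_trivial]
  refine (Fintype.sum_of_injective (Fin.castLE hrm) (Fin.castLE_injective hrm) _ _
    (fun j hj => ?_) fun i => ?_).symm
  · have : ¬ (j : ℕ) < r := fun h => hj ⟨⟨j, h⟩, rfl⟩
    simp [padZeros, this]
  · simp [padZeros]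

lemma padZeros_injective (hrm : r ≤ m) : Function.Injective (padZeros m r) := by
  rw [← LinearMap.ker_eq_bot, LinearMap.ker_eq_bot']
  intro x hx
  rw [← dotProduct_self_eq_zero, ← inner_padZeros hrm, hx, inner_zero_left]

lemma inner_padZeros_row (hrm : r ≤ m) (u : Matrix (Fin r) (Fin r) ℝ) (i j : Fin r) :
    ⟪padZeros m r (u i), padZeros m r (u j)⟫ = (u * uᵀ) i j := by
  rw [inner_padZeros hrm, mul_apply']
  rfl

lemma padZeros_intCast_mul_row (C : Matrix (Fin r) (Fin r) ℤ) (u : Matrix (Fin r) (Fin r) ℝ)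
    (i : Fin r) :
    padZeros m r ((C.map (Int.cast : ℤ → ℝ) * u) i) = ∑ k, C i k • padZeros m r (u k) := by
  rw [mul_apply_eq_vecMul, vecMul_eq_sum, map_sum]
  refine Finset.sum_congr rfl fun k _ => ?_
  rw [map_smul, map_apply, Int.cast_smul_eq_zsmul]

lemma linearIndependent_padZeros_row (hrm : r ≤ m) {u : Matrix (Fin r) (Fin r) ℝ}
    (hu : IsUnit u) : LinearIndependent ℝ fun i => padZeros m r (u i) :=
  (linearIndependent_rows_iff_isUnit.mpr hu).map' _
    (LinearMap.ker_eq_bot.mpr (padZeros_injective hrm))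

lemma isLatticeOfRank_rowLattice (hrm : r ≤ m) {u : Matrix (Fin r) (Fin r) ℝ} (hu : IsUnit u) :
    IsLatticeOfRank m r (rowLattice m r u) :=
  ⟨_, linearIndependent_padZeros_row hrm hu, rowLattice_eq_closure u⟩

lemma rowLattice_intCast_mul_le (C : Matrix (Fin r) (Fin r) ℤ) (u : Matrix (Fin r) (Fin r) ℝ) :
    rowLattice m r (C.map (Int.cast : ℤ → ℝ) * u) ≤ rowLattice m r u := by
  rw [rowLattice_eq_closure, AddSubgroup.closure_le, Set.range_subset_iff]
  intro i
  rw [SetLike.mem_coe, padZeros_intCast_mul_row]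
  exact AddSubgroup.sum_mem _ fun k _ =>
    AddSubgroup.zsmul_mem _ (AddSubgroup.subset_closure (Set.mem_range_self k)) _

lemma rowLattice_intCast_mul (C : GL (Fin r) ℤ) (u : Matrix (Fin r) (Fin r) ℝ) :
    rowLattice m r ((C : Matrix (Fin r) (Fin r) ℤ).map (Int.cast : ℤ → ℝ) * u) =
      rowLattice m r u := by
  refine le_antisymm (rowLattice_intCast_mul_le _ _) ?_
  have hinv : ((C⁻¹ : GL (Fin r) ℤ) : Matrix (Fin r) (Fin r) ℤ).map (Int.cast : ℤ → ℝ) *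
      (C : Matrix (Fin r) (Fin r) ℤ).map (Int.cast : ℤ → ℝ) = 1 := by
    have h := congrArg (Int.castRingHom ℝ).mapMatrix (Units.inv_mul C)
    rwa [map_mul, map_one] at h
  have h := rowLattice_intCast_mul_le (m := m) (C⁻¹ : GL (Fin r) ℤ)
    ((C : Matrix (Fin r) (Fin r) ℤ).map (Int.cast : ℤ → ℝ) * u)
  rwa [← mul_assoc, hinv, one_mul] at h

end Rows

lemma AddSubgroup.map_closure_range {G N ι : Type*} [AddGroup G] [AddGroup N] (f : G →+ N)
    (B : ι → G) :
    (AddSubgroup.closure (Set.range B)).map f = AddSubgroup.closure (Set.range (f ∘ B)) := by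
  rw [AddMonoidHom.map_closure, Set.range_comp]

lemma latticeRelRank_equivalence (m r : ℕ) : Equivalence (LatticeRelRank m r) where
  refl _ := ⟨LinearMap.id, ⟨1, LinearMap.id, one_ne_zero, fun _ _ => rfl, (one_smul _ _).symm⟩,
    (AddSubgroup.map_id _).symm⟩
  symm := by
    rintro Λ Λ' ⟨g, hg, h⟩
    obtain ⟨g', hg', hg'g⟩ := hg.exists_leftInverse
    refine ⟨g', hg', ?_⟩
    rw [h, AddSubgroup.map_map]
    change _ = AddSubgroup.map (g' ∘ₗ g).toAddMonoidHom _
    rw [hg'g]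
    exact (AddSubgroup.map_id _).symm
  trans := by
    rintro Λ Λ' Λ'' ⟨g, hg, h⟩ ⟨f, hf, h'⟩
    exact ⟨f ∘ₗ g, hf.comp hg, by rw [h', h, AddSubgroup.map_map]; rfl⟩

section Classification

variable {m r : ℕ}

lemma isUnit_intCast_mul (C : GL (Fin r) ℤ) {u : Matrix (Fin r) (Fin r) ℝ} (hu : IsUnit u) :
    IsUnit ((C : Matrix (Fin r) (Fin r) ℤ).map (Int.cast : ℤ → ℝ) * u) :=
  (C.isUnit.map (Int.castRingHom ℝ).mapMatrix).mul hu

lemma rowLattice_eq_map_of_glRel (hrm : r ≤ m) {u v : GL (Fin r) ℝ} (h : GLRel r u v) :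
    ∃ g : EuclideanSpace ℝ (Fin m) →ₗ[ℝ] EuclideanSpace ℝ (Fin m), IsCO g ∧
      rowLattice m r u = (rowLattice m r v).map g.toAddMonoidHom := by
  obtain ⟨C, _, ⟨c, K, hc, hK, rfl⟩, huv⟩ := h
  set w := (C : Matrix (Fin r) (Fin r) ℤ).map (Int.cast : ℤ → ℝ) * v
  have hgram : (u : Matrix (Fin r) (Fin r) ℝ) * (u : Matrix (Fin r) (Fin r) ℝ)ᵀ =
      c ^ 2 • (w * wᵀ) := by
    rw [huv, transpose_mul, transpose_smul, mul_assoc, ← mul_assoc (c • K), smul_mul_smul_comm,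
      mul_eq_one_comm.mp hK, ← sq, smul_mul_assoc, mul_smul_comm, one_mul]
  obtain ⟨g, hg, hgw⟩ := exists_isCO_apply_eq_of_inner_eq (A := fun i => padZeros m r (u i))
    (linearIndependent_padZeros_row hrm (isUnit_intCast_mul C v.isUnit)) hc
    fun i j => by rw [inner_padZeros_row hrm, inner_padZeros_row hrm, hgram]; rfl
  refine ⟨g, hg, ?_⟩
  rw [← rowLattice_intCast_mul C v, rowLattice_eq_closure, rowLattice_eq_closure,
    AddSubgroup.map_closure_range]
  exact congrArg _ (congrArg _ (funext fun i => (hgw i).symm))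

lemma glRel_of_rowLattice_eq_map (hrm : r ≤ m) {u v : GL (Fin r) ℝ}
    {g : EuclideanSpace ℝ (Fin m) →ₗ[ℝ] EuclideanSpace ℝ (Fin m)} (hg : IsCO g)
    (h : rowLattice m r v = (rowLattice m r u).map g.toAddMonoidHom) : GLRel r v u := by
  have hB : LinearIndependent ℝ fun i => g (padZeros m r (u i)) :=
    (linearIndependent_padZeros_row hrm u.isUnit).map' g
      (LinearMap.ker_eq_bot.mpr hg.injective)
  rw [rowLattice_eq_closure, rowLattice_eq_closure, AddSubgroup.map_closure_range] at h
  obtain ⟨C, hC⟩ := exists_GL_int_of_closure_range_eq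
    ((linearIndependent_padZeros_row hrm v.isUnit).restrict_scalars' ℤ)
    (hB.restrict_scalars' ℤ) h
  set w := (C : Matrix (Fin r) (Fin r) ℤ).map (Int.cast : ℤ → ℝ) * u
  have hvw : ∀ i, padZeros m r (v i) = g (padZeros m r (w i)) := fun i => by
    rw [hC, padZeros_intCast_mul_row, map_sum]
    simp only [map_zsmul]
  obtain ⟨c, k, hc, hk, rfl⟩ := hg
  have hgram : (v : Matrix (Fin r) (Fin r) ℝ) * (v : Matrix (Fin r) (Fin r) ℝ)ᵀ =
      c ^ 2 • (w * wᵀ) := by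
    ext i j
    rw [← inner_padZeros_row hrm, hvw, hvw, Matrix.smul_apply, ← inner_padZeros_row hrm,
      LinearMap.smul_apply, LinearMap.smul_apply, real_inner_smul_left, real_inner_smul_right,
      hk, smul_eq_mul, ← mul_assoc, sq]
  obtain ⟨G, hG, hv⟩ := exists_mem_COMatrix_eq_mul (isUnit_intCast_mul C u.isUnit) hc hgram
  exact ⟨C, G, hG, hv⟩

lemma exists_rowLattice_map_eq (hrm : r ≤ m) {Λ : AddSubgroup (EuclideanSpace ℝ (Fin m))}
    (hΛ : IsLatticeOfRank m r Λ) :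
    ∃ (u : GL (Fin r) ℝ) (g : EuclideanSpace ℝ (Fin m) →ₗ[ℝ] EuclideanSpace ℝ (Fin m)),
      IsCO g ∧ Λ = (rowLattice m r u).map g.toAddMonoidHom := by
  obtain ⟨w, hw, rfl⟩ := hΛ
  let V := Submodule.span ℝ (Set.range w)
  have hV : Module.finrank ℝ V = r := by rw [finrank_span_eq_card hw, Fintype.card_fin]
  let φ := ((stdOrthonormalBasis ℝ V).reindex (finCongr hV)).repr
  let w' : Fin r → V := fun i => ⟨w i, Submodule.subset_span (Set.mem_range_self i)⟩
  let u : Matrix (Fin r) (Fin r) ℝ := fun i => (φ (w' i)).ofLp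
  have hu : IsUnit u := by
    refine linearIndependent_rows_iff_isUnit.mp ?_
    have hw' : LinearIndependent ℝ w' := LinearIndependent.of_comp V.subtype hw
    exact hw'.map' ((WithLp.linearEquiv 2 ℝ (Fin r → ℝ)).toLinearMap ∘ₗ φ.toLinearMap)
      (LinearMap.ker_eq_bot.mpr ((WithLp.linearEquiv 2 ℝ _).injective.comp φ.injective))
  obtain ⟨g, hg, hgw⟩ := exists_isCO_apply_eq_of_inner_eq (A := w)
    (linearIndependent_padZeros_row hrm hu) one_ne_zero fun i j => by
      rw [one_pow, one_mul, inner_padZeros hrm]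
      calc ⟪w i, w j⟫ = ⟪φ (w' i), φ (w' j)⟫ := (φ.inner_map_map (w' i) (w' j)).symm
        _ = u i ⬝ᵥ u j := by
          rw [EuclideanSpace.inner_eq_star_dotProduct, star_trivial, dotProduct_comm]
  refine ⟨hu.unit, g, hg, ?_⟩
  rw [IsUnit.unit_spec, rowLattice_eq_closure, AddSubgroup.map_closure_range]
  exact congrArg _ (congrArg _ (funext fun i => (hgw i).symm))

end Classification

theorem stmt14_general (m r : ℕ) (hrm : r ≤ m) :
    ∃ F : Quot (GLRel r) → Quot (LatticeRelRank m r),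
      Function.Bijective F ∧
      ∀ u : GL (Fin r) ℝ,
        ∃ hu : IsLatticeOfRank m r (rowLattice m r (u : Matrix (Fin r) (Fin r) ℝ)),
          F (Quot.mk _ u) =
            Quot.mk _ ⟨rowLattice m r (u : Matrix (Fin r) (Fin r) ℝ), hu⟩ := by
  let L (u : GL (Fin r) ℝ) : {Λ // IsLatticeOfRank m r Λ} :=
    ⟨rowLattice m r u, isLatticeOfRank_rowLattice hrm u.isUnit⟩
  refine ⟨Quot.lift (fun u => Quot.mk _ (L u)) fun u v huv => ?_, ⟨?_, ?_⟩, fun u => ⟨_, rfl⟩⟩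
  · obtain ⟨g, hg, h⟩ := rowLattice_eq_map_of_glRel hrm huv
    exact (Quot.sound ⟨g, hg, h⟩).symm
  · rintro ⟨u⟩ ⟨v⟩ huv
    obtain ⟨g, hg, h⟩ := (latticeRelRank_equivalence m r).eqvGen_iff.mp (Quot.eq.mp huv)
    exact (Quot.sound (glRel_of_rowLattice_eq_map hrm hg h)).symm
  · rintro ⟨⟨Λ, hΛ⟩⟩
    obtain ⟨u, g, hg, h⟩ := exists_rowLattice_map_eq hrm hΛ
    exact ⟨Quot.mk _ u, Quot.sound ⟨g, hg, h⟩⟩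

/-- For `1 ≤ r ≤ m`, the map `u ↦ ℤũ₁ + ⋯ + ℤũ_r` induces a
well-defined bijection from `GL_r(ℤ)\GL_r(ℝ)/CO_r(ℝ)` onto the set of rank-`r`
lattices in `ℝ^m` modulo `CO_m(ℝ)`-equivalence. -/
theorem stmt14 (m r : ℕ) (hr : 1 ≤ r) (hrm : r ≤ m) :
    ∃ F : Quot (GLRel r) → Quot (LatticeRelRank m r),
      Function.Bijective F ∧
      ∀ u : GL (Fin r) ℝ,
        ∃ hu : IsLatticeOfRank m r (rowLattice m r (u : Matrix (Fin r) (Fin r) ℝ)),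
          F (Quot.mk _ u) =
            Quot.mk _ ⟨rowLattice m r (u : Matrix (Fin r) (Fin r) ℝ), hu⟩ :=
  stmt14_general m r hrm
end

section
/- Let 1 ≤ r ≤ m and let Λ and Λ′ be lattices of rank r in ℝ^m, both contained in the subspace ℝ^r × {0} spanned by the first r standard basis vectors. If Λ′ = g(Λ) for some g ∈ CO_m(ℝ), then there exists g′ ∈ CO_r(ℝ) such that Λ′ = (g′ × id)(Λ), i.e. applying g′ to the first r coordinates maps Λ onto Λ′. -/
/-!
Since `Λ` has rank `r` and lies in the `r`-dimensional subspace `V = ℝ^r × {0}`, it spans `V`;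
as `g(Λ) = Λ'` also lies in `V`, the map `g` preserves `V`. The compression
`g' = take ∘ g ∘ zeroPad` of `g` to `V ≅ ℝ^r` is then conformal, and `g' × id` agrees with `g`
on `V`, hence on `Λ`.
-/

open scoped RealInnerProductSpace
open Matrix

namespace IsCO

variable {E F : Type*} [NormedAddCommGroup E] [InnerProductSpace ℝ E]
  [NormedAddCommGroup F] [InnerProductSpace ℝ F]

lemma exists_inner_map_map {g : E →ₗ[ℝ] E} (hg : IsCO g) :
    ∃ c : ℝ, c ≠ 0 ∧ ∀ x y, ⟪g x, g y⟫ = c ^ 2 * ⟪x, y⟫ := by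
  obtain ⟨c, k, hc, hk, rfl⟩ := hg
  refine ⟨c, hc, fun x y => ?_⟩
  simp only [LinearMap.smul_apply, real_inner_smul_left, real_inner_smul_right, hk]
  ring

lemma of_inner_map_map {g : E →ₗ[ℝ] E} {c : ℝ} (hc : c ≠ 0)
    (hg : ∀ x y, ⟪g x, g y⟫ = c ^ 2 * ⟪x, y⟫) : IsCO g := by
  refine ⟨c, c⁻¹ • g, hc, fun x y => ?_, by rw [smul_smul, mul_inv_cancel₀ hc, one_smul]⟩
  simp only [LinearMap.smul_apply, real_inner_smul_left, real_inner_smul_right, hg]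
  field_simp

lemma compress {g : E →ₗ[ℝ] E} (hg : IsCO g) (j : F →ₗᵢ[ℝ] E) (q : E →ₗ[ℝ] F)
    {V : Submodule ℝ E} (hq : ∀ x ∈ V, ∀ y ∈ V, ⟪q x, q y⟫ = ⟪x, y⟫)
    (hgj : ∀ x, g (j x) ∈ V) : IsCO (q ∘ₗ g ∘ₗ j.toLinearMap) := by
  obtain ⟨c, hc, hgc⟩ := hg.exists_inner_map_map
  refine of_inner_map_map hc fun x y => ?_
  simp only [LinearMap.comp_apply, LinearIsometry.coe_toLinearMap]
  rw [hq _ (hgj x) _ (hgj y), hgc, LinearIsometry.inner_map_map]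

end IsCO

lemma IsLatticeOfRank.span_eq {m r : ℕ} {Λ : AddSubgroup (EuclideanSpace ℝ (Fin m))}
    (hΛ : IsLatticeOfRank m r Λ) {V : Submodule ℝ (EuclideanSpace ℝ (Fin m))}
    (hΛV : ∀ x ∈ Λ, x ∈ V) (hV : Module.finrank ℝ V ≤ r) :
    Submodule.span ℝ (Λ : Set (EuclideanSpace ℝ (Fin m))) = V := by
  obtain ⟨v, hv, rfl⟩ := hΛ
  refine Submodule.eq_of_le_of_finrank_le (Submodule.span_le.mpr hΛV) (hV.trans ?_)
  calc r = Module.finrank ℝ (Submodule.span ℝ (Set.range v)) := by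
        rw [finrank_span_eq_card hv, Fintype.card_fin]
    _ ≤ _ := Submodule.finrank_mono (Submodule.span_mono AddSubgroup.subset_closure)

namespace EuclideanSpace

variable {m r : ℕ} (hrm : r ≤ m)

def take : EuclideanSpace ℝ (Fin m) →ₗ[ℝ] EuclideanSpace ℝ (Fin r) where
  toFun x := WithLp.toLp 2 (fun i => x (Fin.castLE hrm i))
  map_add' _ _ := rfl
  map_smul' _ _ := rfl

lemma take_apply (x : EuclideanSpace ℝ (Fin m)) (i : Fin r) :
    take hrm x i = x (Fin.castLE hrm i) := rfl

lemma inner_take_take {x : EuclideanSpace ℝ (Fin m)}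
    (hx : ∀ j : Fin m, r ≤ (j : ℕ) → x j = 0) (y : EuclideanSpace ℝ (Fin m)) :
    ⟪take hrm x, take hrm y⟫ = ⟪x, y⟫ := by
  simp only [PiLp.inner_apply, RCLike.inner_apply, conj_trivial, take_apply]
  refine Fintype.sum_of_injective _ (Fin.castLE_injective hrm) _ _ (fun j hj => ?_) fun _ => rfl
  have : r ≤ (j : ℕ) := by
    by_contra! h
    exact hj ⟨⟨j, h⟩, rfl⟩
  rw [hx j this, mul_zero]

def zeroPadₗ : EuclideanSpace ℝ (Fin r) →ₗ[ℝ] EuclideanSpace ℝ (Fin m) where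
  toFun y := WithLp.toLp 2 (fun j => if h : (j : ℕ) < r then y ⟨j, h⟩ else 0)
  map_add' y z := by ext j; by_cases h : (j : ℕ) < r <;> simp [h]
  map_smul' c y := by ext j; by_cases h : (j : ℕ) < r <;> simp [h]

lemma zeroPadₗ_apply (y : EuclideanSpace ℝ (Fin r)) (j : Fin m) :
    zeroPadₗ y j = if h : (j : ℕ) < r then y ⟨j, h⟩ else 0 := rfl

lemma zeroPadₗ_apply_of_le (y : EuclideanSpace ℝ (Fin r)) {j : Fin m} (hj : r ≤ (j : ℕ)) :
    zeroPadₗ y j = 0 := by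
  simp [zeroPadₗ_apply, hj.not_gt]

lemma take_zeroPadₗ (y : EuclideanSpace ℝ (Fin r)) : take hrm (zeroPadₗ y) = y := by
  ext i
  simp [take_apply, zeroPadₗ_apply]

noncomputable def zeroPad : EuclideanSpace ℝ (Fin r) →ₗᵢ[ℝ] EuclideanSpace ℝ (Fin m) :=
  zeroPadₗ.isometryOfInner fun y z => by
    rw [← inner_take_take hrm (fun _ => zeroPadₗ_apply_of_le y), take_zeroPadₗ,
      take_zeroPadₗ]

lemma take_zeroPad (y : EuclideanSpace ℝ (Fin r)) : take hrm (zeroPad hrm y) = y :=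
  take_zeroPadₗ hrm y

lemma mem_range_zeroPad_iff {x : EuclideanSpace ℝ (Fin m)} :
    x ∈ LinearMap.range (zeroPad hrm).toLinearMap ↔ ∀ j : Fin m, r ≤ (j : ℕ) → x j = 0 := by
  refine ⟨?_, fun hx => ⟨take hrm x, ?_⟩⟩
  · rintro ⟨y, rfl⟩ j hj
    exact zeroPadₗ_apply_of_le y hj
  · ext j
    by_cases h : (j : ℕ) < r
    · simp [zeroPad, zeroPadₗ_apply, h, take_apply]
    · simp [zeroPad, zeroPadₗ_apply, h, hx j (not_lt.mp h)]

lemma finrank_range_zeroPad :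
    Module.finrank ℝ (LinearMap.range (zeroPad hrm).toLinearMap) = r := by
  rw [LinearMap.finrank_range_of_inj (zeroPad hrm).injective, finrank_euclideanSpace_fin]

/-- `f × id` on `ℝ^m = ℝ^r × ℝ^(m - r)`. -/
noncomputable def prodMapId (f : EuclideanSpace ℝ (Fin r) →ₗ[ℝ] EuclideanSpace ℝ (Fin r)) :
    EuclideanSpace ℝ (Fin m) →ₗ[ℝ] EuclideanSpace ℝ (Fin m) :=
  (zeroPad hrm).toLinearMap ∘ₗ (f - LinearMap.id) ∘ₗ take hrm + LinearMap.id

lemma prodMapId_apply (f : EuclideanSpace ℝ (Fin r) →ₗ[ℝ] EuclideanSpace ℝ (Fin r))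
    (x : EuclideanSpace ℝ (Fin m)) (j : Fin m) :
    prodMapId hrm f x j = if hj : (j : ℕ) < r then f (take hrm x) ⟨j, hj⟩ else x j := by
  by_cases hj : (j : ℕ) < r
  · simp [prodMapId, zeroPad, zeroPadₗ_apply, hj, take_apply]
  · simp [prodMapId, zeroPad, zeroPadₗ_apply, hj]

lemma prodMapId_zeroPad (f : EuclideanSpace ℝ (Fin r) →ₗ[ℝ] EuclideanSpace ℝ (Fin r))
    (y : EuclideanSpace ℝ (Fin r)) : prodMapId hrm f (zeroPad hrm y) = zeroPad hrm (f y) := by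
  simp [prodMapId, take_zeroPad]

end EuclideanSpace

lemma AddSubgroup.map_congr {G H : Type*} [AddGroup G] [AddGroup H] {K : AddSubgroup G}
    {f f' : G →+ H} (h : ∀ x ∈ K, f x = f' x) : K.map f = K.map f' :=
  SetLike.coe_injective <| by simpa only [AddSubgroup.coe_map] using Set.image_congr h

theorem stmt17_general (m r : ℕ) (hrm : r ≤ m)
    (Λ Λ' : AddSubgroup (EuclideanSpace ℝ (Fin m)))
    (hΛ : IsLatticeOfRank m r Λ)
    (hΛ0 : ∀ x ∈ Λ, ∀ j : Fin m, r ≤ (j : ℕ) → x j = 0)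
    (hΛ'0 : ∀ x ∈ Λ', ∀ j : Fin m, r ≤ (j : ℕ) → x j = 0)
    (g : EuclideanSpace ℝ (Fin m) →ₗ[ℝ] EuclideanSpace ℝ (Fin m))
    (hg : IsCO g) (hgΛ : Λ' = AddSubgroup.map g.toAddMonoidHom Λ) :
    ∃ (g' : EuclideanSpace ℝ (Fin r) →ₗ[ℝ] EuclideanSpace ℝ (Fin r))
      (G : EuclideanSpace ℝ (Fin m) →ₗ[ℝ] EuclideanSpace ℝ (Fin m)),
      IsCO g' ∧
      (∀ (x : EuclideanSpace ℝ (Fin m)) (j : Fin m),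
        G x j = if hj : (j : ℕ) < r then
            g' (WithLp.toLp 2 (fun i : Fin r => x (Fin.castLE hrm i))) ⟨(j : ℕ), hj⟩
          else x j) ∧
      Λ' = AddSubgroup.map G.toAddMonoidHom Λ := by
  set V := LinearMap.range (EuclideanSpace.zeroPad hrm).toLinearMap
  have hV (x) : x ∈ V ↔ ∀ j : Fin m, r ≤ (j : ℕ) → x j = 0 :=
    EuclideanSpace.mem_range_zeroPad_iff hrm
  have hΛV (x) (hx : x ∈ Λ) : x ∈ V := (hV x).mpr (hΛ0 x hx)
  have hgΛV (x) (hx : x ∈ Λ) : g x ∈ V :=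
    (hV _).mpr (hΛ'0 _ (hgΛ ▸ AddSubgroup.mem_map_of_mem _ hx))
  have hgV : V ≤ V.comap g :=
    calc V = Submodule.span ℝ Λ :=
          (hΛ.span_eq hΛV (EuclideanSpace.finrank_range_zeroPad hrm).le).symm
      _ ≤ V.comap g := Submodule.span_le.mpr hgΛV
  set g' := EuclideanSpace.take hrm ∘ₗ g ∘ₗ (EuclideanSpace.zeroPad hrm).toLinearMap
  have hg' : IsCO g' := hg.compress (EuclideanSpace.zeroPad hrm) (EuclideanSpace.take hrm)
    (fun x hx y _ => EuclideanSpace.inner_take_take hrm ((hV x).mp hx) y)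
    (fun y => hgV ⟨y, rfl⟩)
  set G := EuclideanSpace.prodMapId hrm g'
  have hGg (x) (hx : x ∈ Λ) : G x = g x := by
    obtain ⟨y, rfl⟩ := hΛV x hx
    obtain ⟨z, hz⟩ := hgV ⟨y, rfl⟩
    simp only [G, g', EuclideanSpace.prodMapId_zeroPad, LinearMap.comp_apply,
      LinearIsometry.coe_toLinearMap] at hz ⊢
    rw [← hz, EuclideanSpace.take_zeroPad]
  exact ⟨g', G, hg', EuclideanSpace.prodMapId_apply hrm g',
    hgΛ.trans (AddSubgroup.map_congr fun x hx => (hGg x hx).symm)⟩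

/-- Let `1 ≤ r ≤ m` and let `Λ, Λ'` be rank-`r` lattices in `ℝ^m`
contained in the subspace `ℝ^r × {0}`.  If `Λ' = g(Λ)` for some `g ∈ CO_m(ℝ)`, then
there is `g' ∈ CO_r(ℝ)` with `Λ' = (g' × id)(Λ)`, where `g' × id` acts as `g'` on the
first `r` coordinates and as the identity on the remaining ones. -/
theorem stmt17 (m r : ℕ) (hr : 1 ≤ r) (hrm : r ≤ m)
    (Λ Λ' : AddSubgroup (EuclideanSpace ℝ (Fin m)))
    (hΛ : IsLatticeOfRank m r Λ) (hΛ' : IsLatticeOfRank m r Λ')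
    (hΛ0 : ∀ x ∈ Λ, ∀ j : Fin m, r ≤ (j : ℕ) → x j = 0)
    (hΛ'0 : ∀ x ∈ Λ', ∀ j : Fin m, r ≤ (j : ℕ) → x j = 0)
    (g : EuclideanSpace ℝ (Fin m) →ₗ[ℝ] EuclideanSpace ℝ (Fin m))
    (hg : IsCO g) (hgΛ : Λ' = AddSubgroup.map g.toAddMonoidHom Λ) :
    ∃ (g' : EuclideanSpace ℝ (Fin r) →ₗ[ℝ] EuclideanSpace ℝ (Fin r))
      (G : EuclideanSpace ℝ (Fin m) →ₗ[ℝ] EuclideanSpace ℝ (Fin m)),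
      IsCO g' ∧
      (∀ (x : EuclideanSpace ℝ (Fin m)) (j : Fin m),
        G x j = if hj : (j : ℕ) < r then
            g' (WithLp.toLp 2 (fun i : Fin r => x (Fin.castLE hrm i))) ⟨(j : ℕ), hj⟩
          else x j) ∧
      Λ' = AddSubgroup.map G.toAddMonoidHom Λ :=
  stmt17_general m r hrm Λ Λ' hΛ hΛ0 hΛ'0 g hg hgΛ
end

section
/- Let Λ be a lattice of rank 2 in ℂ, i.e. an additive subgroup Λ = ℤw₁ + ℤw₂ with w₁, w₂ ∈ ℂ linearly independent over ℝ. Then there exist c ∈ ℂ with c ≠ 0 and ρ ∈ D₁ such that Λ = c·(ℤ + ℤρ), where D₁ = {ρ ∈ ℂ : Im ρ > 0, |ρ| ≤ 1, |ρ − 1| ≥ 1, |ρ + 1| ≥ 1}. -/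
/-! The lattice `ℤw₁ + ℤw₂` is `w₁ · (ℤ + ℤτ)` with `τ = w₂ / w₁`, which lies in the upper half
plane after replacing `w₂` by `-w₂`. For `γ = !![a, b; c, d] ∈ SL(2, ℤ)` we have
`(cτ + d) · (ℤ + ℤ·γτ) = ℤ(cτ + d) + ℤ(aτ + b) = ℤ + ℤτ` because `ad - bc = 1`, so `τ` may be moved
into the standard fundamental domain `𝒟 = {|τ| ≥ 1, |Re τ| ≤ 1/2}`; and `D₁` is the image of `𝒟`
under `S : τ ↦ -1/τ`. -/

/-- The fundamental region
`D₁ = {ρ ∈ ℂ : Im ρ > 0, |ρ| ≤ 1, |ρ − 1| ≥ 1, |ρ + 1| ≥ 1}`. -/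
def D1 : Set ℂ :=
  {ρ : ℂ | 0 < ρ.im ∧ ‖ρ‖ ≤ 1 ∧
    1 ≤ ‖ρ - 1‖ ∧ 1 ≤ ‖ρ + 1‖}

open UpperHalfPlane ModularGroup Modular MatrixGroups

namespace AddSubgroup

theorem closure_pair_eq_of_isUnit_det {M : Type*} [AddCommGroup M] (x y : M) {a b c d : ℤ}
    (hdet : IsUnit (a * d - b * c)) :
    closure {a • x + b • y, c • x + d • y} = closure {x, y} := by
  set e := a * d - b * c
  have he : e * e = 1 := Int.isUnit_mul_self hdet
  apply le_antisymm <;> rw [closure_le, Set.insert_subset_iff, Set.singleton_subset_iff] <;>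
    simp only [SetLike.mem_coe, mem_closure_pair]
  · exact ⟨⟨a, b, rfl⟩, ⟨c, d, rfl⟩⟩
  · refine ⟨⟨e * d, -(e * b), ?_⟩, ⟨-(e * c), e * a, ?_⟩⟩
    · linear_combination (norm := module) he • x
    · linear_combination (norm := module) he • y

theorem image_mul_left_closure {R : Type*} [NonUnitalNonAssocRing R] (a : R) (s : Set R) :
    (a * ·) '' (closure s : Set R) = closure ((a * ·) '' s) := by
  simpa using (coe_map (AddMonoidHom.mulLeft a) (closure s)).symm.trans
    congr($(AddMonoidHom.map_closure (AddMonoidHom.mulLeft a) s))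

end AddSubgroup

theorem image_mul_denom_closure_one_smul (γ : SL(2, ℤ)) (τ : ℍ) :
    (denom γ τ * ·) '' (AddSubgroup.closure {1, (↑(γ • τ) : ℂ)} : Set ℂ) =
      AddSubgroup.closure {1, (τ : ℂ)} := by
  have hq : denom γ τ = (γ 1 0 : ℂ) * τ + γ 1 1 := by simp [denom_apply]
  have hp : denom γ τ * ↑(γ • τ) = (γ 0 0 : ℂ) * τ + γ 0 1 := by
    rw [coe_specialLinearGroup_apply]
    simp only [algebraMap_int_eq, eq_intCast, Complex.ofReal_intCast]
    rw [← hq, mul_div_cancel₀ _ (denom_ne_zero γ τ)]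
  have hdet : γ 1 0 * γ 0 1 - γ 1 1 * γ 0 0 = -1 := by
    have := γ.det_coe
    rw [Matrix.det_fin_two] at this
    linarith
  have hbasis := AddSubgroup.closure_pair_eq_of_isUnit_det (τ : ℂ) 1 (hdet ▸ isUnit_one.neg)
  simp only [zsmul_eq_mul, mul_one] at hbasis
  rw [AddSubgroup.image_mul_left_closure, Set.image_pair, mul_one, hp, hq, hbasis, Set.pair_comm]

theorem Complex.norm_le_norm_add_one {w : ℂ} (hw : -(1 / 2) ≤ w.re) : ‖w‖ ≤ ‖w + 1‖ := by
  rw [← sq_le_sq₀ (norm_nonneg _) (norm_nonneg _), ← Complex.normSq_eq_norm_sq,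
    ← Complex.normSq_eq_norm_sq, Complex.normSq_add, Complex.normSq_one]
  simp only [map_one, mul_one]
  linarith

theorem coe_S_smul_mem_D1 {z : ℍ} (hz : z ∈ 𝒟) : ((S • z : ℍ) : ℂ) ∈ D1 := by
  obtain ⟨hnorm, hre⟩ := hz
  rw [abs_le] at hre
  have hz0 : (z : ℂ) ≠ 0 := z.ne_zero
  have hone : 1 ≤ ‖(z : ℂ)‖ := by
    rwa [Complex.normSq_eq_norm_sq, one_le_sq_iff_one_le_abs, abs_norm] at hnorm
  have hpos : 0 < ‖(z : ℂ)‖ := one_pos.trans_le hone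
  rw [modular_S_smul, coe_mk]
  refine ⟨z.im_inv_neg_coe_pos, ?_, ?_, ?_⟩
  · rw [norm_inv, norm_neg]
    exact inv_le_one_of_one_le₀ hone
  · have : (-(z : ℂ))⁻¹ - 1 = -((z + 1) / z) := by field_simp; ring
    rw [this, norm_neg, norm_div, one_le_div hpos]
    exact Complex.norm_le_norm_add_one (by simpa using hre.1)
  · have : (-(z : ℂ))⁻¹ + 1 = (-z + 1) / (-z) := by field_simp; ring
    rw [this, norm_div, one_le_div (by simpa using hpos)]
    exact Complex.norm_le_norm_add_one (by simpa using hre.2)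

theorem Complex.im_div_ne_zero_of_linearIndependent {w₁ w₂ : ℂ}
    (h : LinearIndependent ℝ ![w₁, w₂]) : (w₂ / w₁).im ≠ 0 := by
  have hw₁ : w₁ ≠ 0 := by simpa using h.ne_zero 0
  intro him
  refine (LinearIndependent.pair_iff' hw₁).mp h (w₂ / w₁).re ?_
  have hreal : (((w₂ / w₁).re : ℝ) : ℂ) = w₂ / w₁ := Complex.ext rfl (by simp [him])
  rw [Complex.real_smul, hreal, div_mul_cancel₀ _ hw₁]

theorem exists_eq_image_mul_closure_one_of_im_pos {w₁ w₂ : ℂ} (hw₁ : w₁ ≠ 0)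
    (him : 0 < (w₂ / w₁).im) :
    ∃ (c ρ : ℂ), c ≠ 0 ∧ ρ ∈ D1 ∧
      ((AddSubgroup.closure {w₁, w₂} : AddSubgroup ℂ) : Set ℂ) =
        (fun z : ℂ => c * z) '' ((AddSubgroup.closure {1, ρ} : AddSubgroup ℂ) : Set ℂ) := by
  let τ : ℍ := ⟨w₂ / w₁, him⟩
  obtain ⟨g, hg⟩ := exists_smul_mem_fd τ
  let γ : SL(2, ℤ) := S * g
  refine ⟨w₁ * denom γ τ, ↑(γ • τ), mul_ne_zero hw₁ (denom_ne_zero _ _),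
    (mul_smul S g τ).symm ▸ coe_S_smul_mem_D1 hg, ?_⟩
  have hw₂ : w₂ = w₁ * τ := (mul_div_cancel₀ w₂ hw₁).symm
  rw [show (fun z => w₁ * denom γ τ * z) = (w₁ * ·) ∘ (denom γ τ * ·) from
      funext fun z => mul_assoc _ _ _, Set.image_comp, image_mul_denom_closure_one_smul,
    AddSubgroup.image_mul_left_closure, Set.image_pair, mul_one, ← hw₂]

/-- For every rank-2 lattice `Λ = ℤw₁ + ℤw₂` in `ℂ` (with `w₁, w₂`
linearly independent over `ℝ`) there exist `c ≠ 0` and `ρ ∈ D₁` such that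
`Λ = c·(ℤ + ℤρ)`. -/
theorem stmt18 (w₁ w₂ : ℂ) (h : LinearIndependent ℝ ![w₁, w₂]) :
    ∃ (c ρ : ℂ), c ≠ 0 ∧ ρ ∈ D1 ∧
      ((AddSubgroup.closure {w₁, w₂} : AddSubgroup ℂ) : Set ℂ) =
        (fun z : ℂ => c * z) '' ((AddSubgroup.closure {1, ρ} : AddSubgroup ℂ) : Set ℂ) := by
  have hw₁ : w₁ ≠ 0 := by simpa using h.ne_zero 0
  rcases (Complex.im_div_ne_zero_of_linearIndependent h).lt_or_gt with hneg | hpos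
  · have hflip : AddSubgroup.closure {w₁, -w₂} = AddSubgroup.closure {w₁, w₂} := by
      simpa using AddSubgroup.closure_pair_eq_of_isUnit_det w₁ w₂ (a := 1) (b := 0) (c := 0)
        (d := -1) (by norm_num)
    rw [← hflip]
    exact exists_eq_image_mul_closure_one_of_im_pos hw₁ (by simpa [neg_div] using hneg)
  · exact exists_eq_image_mul_closure_one_of_im_pos hw₁ hpos
end
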